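/- Let S = [[A, B], [C, D]] be a symplectic matrix. Then Aᵀ restricted to R(B)ᗮ is a linear isomorphism onto ker(B). -/

import Mathlib

/-!
Both `S` and `Sᵀ` are symplectic, which gives the block identities `AᵀD - CᵀB = 1`,
`BᵀD = DᵀB`, `ABᵀ = BAᵀ` and `DAᵀ - CBᵀ = 1`. As `R(B)ᗮ = ker Bᵀ`, they say that `Aᵀ` maps
`ker Bᵀ` into `ker B`, that `D` maps `ker B` into `ker Bᵀ`, and that these two maps are inverse
to each other there.
-/

open Matrix

namespace Matrix

variable {l m n o R : Type*} [Fintype l] [Fintype n] [Fintype o]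
  [DecidableEq l] [DecidableEq n] [DecidableEq o] [CommRing R]

theorem mapsTo_ker_toLpLin_of_mul_eq_mul (p : ENNReal) {P : Matrix m n R} {Q : Matrix n o R}
    {T : Matrix m l R} {U : Matrix l o R} (h : P * Q = T * U) :
    Set.MapsTo (toLpLin p p Q) (LinearMap.ker (toLpLin p p U)) (LinearMap.ker (toLpLin p p P)) := by
  intro x hx
  simp only [SetLike.mem_coe, LinearMap.mem_ker] at hx ⊢
  rw [← LinearMap.comp_apply, ← toLpLin_mul_same, h, toLpLin_mul_same, LinearMap.comp_apply, hx,
    map_zero]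

theorem leftInvOn_ker_toLpLin_of_mul_sub_mul_eq_one (p : ENNReal) {P : Matrix o n R}
    {Q : Matrix n o R} {T : Matrix o l R} {U : Matrix l o R} (h : P * Q - T * U = 1) :
    Set.LeftInvOn (toLpLin p p P) (toLpLin p p Q) (LinearMap.ker (toLpLin p p U)) := by
  intro x hx
  rw [SetLike.mem_coe, LinearMap.mem_ker] at hx
  rw [← LinearMap.comp_apply, ← toLpLin_mul_same, eq_add_of_sub_eq' h, map_add, toLpLin_mul_same,
    toLpLin_one, LinearMap.add_apply, LinearMap.comp_apply, hx, map_zero, zero_add, LinearMap.id_apply]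

theorem orthogonal_range_toEuclideanLin {m n : Type*} [Fintype m] [Fintype n] [DecidableEq m]
    [DecidableEq n] (B : Matrix m n ℝ) :
    (LinearMap.range (toEuclideanLin B))ᗮ = LinearMap.ker (toEuclideanLin Bᵀ) := by
  rw [LinearMap.orthogonal_range, ← toEuclideanLin_conjTranspose_eq_adjoint,
    conjTranspose_eq_transpose_of_trivial]

end Matrix

namespace SymplecticGroup

variable {l R : Type*} [DecidableEq l] [CommRing R]

theorem neg_J : -J l R = fromBlocks 0 1 (-1) 0 := by
  simp [J, fromBlocks_neg]

variable [Fintype l]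

theorem mem_iff_transpose_mul_neg_J_mul {S : Matrix (l ⊕ l) (l ⊕ l) R} :
    S ∈ symplecticGroup l R ↔ Sᵀ * (-J l R) * S = -J l R := by
  rw [mem_iff', Matrix.mul_neg, Matrix.neg_mul, neg_inj]

theorem fromBlocks_mem_iff' {A B C D : Matrix l l R} :
    fromBlocks A B C D ∈ symplecticGroup l R ↔
      A * Bᵀ = B * Aᵀ ∧ C * Dᵀ = D * Cᵀ ∧ A * Dᵀ - B * Cᵀ = 1 := by
  rw [← transpose_mem_iff, fromBlocks_transpose, fromBlocks_mem_iff]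
  simp only [transpose_transpose]

end SymplecticGroup

theorem Submodule.map_eq_of_bijOn {R M N : Type*} [Semiring R] [AddCommMonoid M] [AddCommMonoid N]
    [Module R M] [Module R N] {f : M →ₗ[R] N} {U : Submodule R M} {V : Submodule R N}
    (h : Set.BijOn f U V) : U.map f = V :=
  SetLike.coe_injective (by rw [Submodule.map_coe]; exact h.image_eq)

theorem symplectic_AT_iso_rangeB_perp_kerB {d : ℕ} (A B C D : Matrix (Fin d) (Fin d) ℝ)
    (hS : (fromBlocks A B C D)ᵀ * fromBlocks 0 1 (-1) 0 * fromBlocks A B C D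
        = fromBlocks (0 : Matrix (Fin d) (Fin d) ℝ) 1 (-1) 0) :
    ((LinearMap.range (Matrix.toEuclideanLin B))ᗮ).map (Matrix.toEuclideanLin Aᵀ)
        = LinearMap.ker (Matrix.toEuclideanLin B)
      ∧ Set.InjOn (Matrix.toEuclideanLin Aᵀ)
        ((LinearMap.range (Matrix.toEuclideanLin B))ᗮ : Set (EuclideanSpace ℝ (Fin d))) := by
  rw [← SymplecticGroup.neg_J, ← SymplecticGroup.mem_iff_transpose_mul_neg_J_mul] at hS
  obtain ⟨-, hBD, hAD⟩ := SymplecticGroup.fromBlocks_mem_iff.mp hS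
  obtain ⟨hAB, -, hADt⟩ := SymplecticGroup.fromBlocks_mem_iff'.mp hS
  have hDA : D * Aᵀ - C * Bᵀ = 1 := by
    simpa [transpose_sub, transpose_mul] using congrArg transpose hADt
  have hBij : Set.BijOn (toEuclideanLin Aᵀ) (LinearMap.ker (toEuclideanLin Bᵀ))
      (LinearMap.ker (toEuclideanLin B)) :=
    Set.InvOn.bijOn
      ⟨leftInvOn_ker_toLpLin_of_mul_sub_mul_eq_one 2 hDA,
        leftInvOn_ker_toLpLin_of_mul_sub_mul_eq_one 2 hAD⟩
      (mapsTo_ker_toLpLin_of_mul_eq_mul 2 hAB.symm)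
      (mapsTo_ker_toLpLin_of_mul_eq_mul 2 hBD)
  rw [orthogonal_range_toEuclideanLin]
  exact ⟨Submodule.map_eq_of_bijOn hBij, hBij.injOn⟩
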